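/- arXiv:1905.10743 — 4 statements merged into one kernel-verified Lean document; each statement's English description precedes it below -/
import Mathlib

section
/- For complex numbers s and w with Re(s+w-1) > 0 and Re(s-w) > 0, the integral over u from 0 to infinity of u^{w - 3/2} * (u + u^{-1} + 2)^{1/2 - s} du equals Gamma(s+w-1) * Gamma(s-w) / Gamma(2s-1). -/
open MeasureTheory Complex

lemma aux_inv_cpow {p : ℝ} (hp : 0 < p) (c : ℂ) :
    ((p⁻¹ : ℝ) : ℂ) ^ c = ((p : ℝ) : ℂ) ^ (-c) := by
  rw [Complex.ofReal_inv, Complex.inv_cpow, ← Complex.cpow_neg]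
  rw [Complex.arg_ofReal_of_nonneg hp.le]
  exact Real.pi_ne_zero.symm

lemma beta_Ioi {a b : ℂ} (ha : 0 < a.re) (hb : 0 < b.re) :
    ∫ u in Set.Ioi (0 : ℝ), (u : ℂ) ^ (a - 1) * ((1 + u : ℝ) : ℂ) ^ (-(a + b))
      = Complex.Gamma a * Complex.Gamma b / Complex.Gamma (a + b) := by
  have himg : (fun x : ℝ => x / (1 - x)) '' Set.Ioo 0 1 = Set.Ioi (0 : ℝ) := by
    ext y
    constructor
    · rintro ⟨x, hx, rfl⟩
      exact div_pos hx.1 (by linarith [hx.2])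
    · intro hy
      have hy' : (0 : ℝ) < y := hy
      refine ⟨y / (1 + y), ⟨div_pos hy' (by linarith), (div_lt_one (by linarith)).2 (by linarith)⟩, ?_⟩
      have h1y : (1 : ℝ) + y ≠ 0 := by positivity
      field_simp; ring
  have hderiv : ∀ x ∈ Set.Ioo (0 : ℝ) 1,
      HasDerivWithinAt (fun x : ℝ => x / (1 - x)) (((1 - x) ^ 2)⁻¹) (Set.Ioo 0 1) x := by
    intro x hx
    have hne : (1 : ℝ) - x ≠ 0 := by linarith [hx.2]
    have := (hasDerivAt_id x).div ((hasDerivAt_const x (1 : ℝ)).sub (hasDerivAt_id x)) hne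
    convert this.hasDerivWithinAt using 1
    · rfl
    · rfl
    · rfl
    · simp only [Pi.sub_apply, id]; field_simp; ring
  have hinj : Set.InjOn (fun x : ℝ => x / (1 - x)) (Set.Ioo 0 1) := by
    intro x hx y hy h
    have hnx : (1 : ℝ) - x ≠ 0 := by linarith [hx.2]
    have hny : (1 : ℝ) - y ≠ 0 := by linarith [hy.2]
    field_simp at h
    linarith
  have key := integral_image_eq_integral_abs_deriv_smul measurableSet_Ioo hderiv hinj
    (fun u : ℝ => (u : ℂ) ^ (a - 1) * ((1 + u : ℝ) : ℂ) ^ (-(a + b)))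
  rw [himg] at key
  rw [key]
  have hbeta : ∫ x in Set.Ioo (0 : ℝ) 1,
      |((1 - x : ℝ) ^ 2)⁻¹| • ((((x / (1 - x) : ℝ)) : ℂ) ^ (a - 1)
        * ((1 + x / (1 - x) : ℝ) : ℂ) ^ (-(a + b)))
      = Complex.betaIntegral a b := by
    rw [Complex.betaIntegral, intervalIntegral.integral_of_le zero_le_one,
      MeasureTheory.integral_Ioc_eq_integral_Ioo]
    refine setIntegral_congr_fun measurableSet_Ioo fun x hx => ?_
    have hx0 : (0 : ℝ) < x := hx.1
    have hx1 : (0 : ℝ) < 1 - x := by linarith [hx.2]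
    have hne : ((1 - x : ℝ) : ℂ) ≠ 0 := by exact_mod_cast hx1.ne'
    have hne' : (1 : ℂ) - (x : ℂ) ≠ 0 := by push_cast at hne; exact hne
    have e1 : ((x / (1 - x) : ℝ) : ℂ) ^ (a - 1)
        = (x : ℂ) ^ (a - 1) * ((1 - x : ℝ) : ℂ) ^ (-(a - 1)) := by
      rw [div_eq_mul_inv, Complex.ofReal_mul,
        Complex.mul_cpow_ofReal_nonneg hx0.le (inv_nonneg.2 hx1.le), aux_inv_cpow hx1 (a - 1)]
    have e2 : ((1 + x / (1 - x) : ℝ) : ℂ) ^ (-(a + b)) = ((1 - x : ℝ) : ℂ) ^ (a + b) := by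
      have : (1 + x / (1 - x) : ℝ) = (1 - x)⁻¹ := by field_simp; ring
      rw [this, aux_inv_cpow hx1, neg_neg]
    have e3 : |((1 - x : ℝ) ^ 2)⁻¹| = ((1 - x : ℝ))⁻¹ * ((1 - x))⁻¹ := by
      rw [abs_of_pos (by positivity), sq, mul_inv]
    rw [e1, e2, e3, real_smul]
    push_cast
    have expand : ((1 : ℂ) - x) ^ (b - 1)
        = ((1 : ℂ) - x) ^ (-1 : ℂ) * ((1 : ℂ) - x) ^ (-1 : ℂ)
          * (((1 : ℂ) - x) ^ (-(a - 1)) * ((1 : ℂ) - x) ^ (a + b)) := by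
      rw [← Complex.cpow_add _ _ hne', ← Complex.cpow_add _ _ hne',
        ← Complex.cpow_add _ _ hne']
      congr 1; ring
    rw [expand, Complex.cpow_neg_one]
    ring
  rw [hbeta]
  have h := Complex.Gamma_mul_Gamma_eq_betaIntegral ha hb
  have hG : Complex.Gamma (a + b) ≠ 0 :=
    Complex.Gamma_ne_zero_of_re_pos (by rw [Complex.add_re]; linarith)
  field_simp [h]
  rw [h]; ring

/-- For complex `s, w` with `Re(s+w-1) > 0` and `Re(s-w) > 0`,
`∫_0^∞ u^{w-3/2} (u + u⁻¹ + 2)^{1/2-s} du = Γ(s+w-1) Γ(s-w) / Γ(2s-1)`. -/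
theorem stmt_3 (s w : ℂ) (h1 : 0 < (s + w - 1).re) (h2 : 0 < (s - w).re) :
    ∫ u in Set.Ioi (0 : ℝ), (u : ℂ) ^ (w - 3 / 2) * ((u + u⁻¹ + 2 : ℝ) : ℂ) ^ (1 / 2 - s)
      = Complex.Gamma (s + w - 1) * Complex.Gamma (s - w) / Complex.Gamma (2 * s - 1) := by
  have key : ∫ u in Set.Ioi (0 : ℝ), (u : ℂ) ^ (w - 3 / 2) * ((u + u⁻¹ + 2 : ℝ) : ℂ) ^ (1 / 2 - s)
      = ∫ u in Set.Ioi (0 : ℝ),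
        (u : ℂ) ^ ((s + w - 1) - 1) * ((1 + u : ℝ) : ℂ) ^ (-((s + w - 1) + (s - w))) := by
    refine setIntegral_congr_fun measurableSet_Ioi fun u hu => ?_
    have hu0 : (0 : ℝ) < u := hu
    have hu0' : (u : ℂ) ≠ 0 := by exact_mod_cast hu0.ne'
    have h1u : (0 : ℝ) < 1 + u := by linarith
    have h1u' : ((1 + u : ℝ) : ℂ) ≠ 0 := by exact_mod_cast h1u.ne'
    have hbase : (u + u⁻¹ + 2 : ℝ) = (1 + u) * (1 + u) * u⁻¹ := by field_simp; ring
    rw [hbase, Complex.ofReal_mul,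
      Complex.mul_cpow_ofReal_nonneg (by positivity) (inv_nonneg.2 hu0.le),
      Complex.ofReal_mul, Complex.mul_cpow_ofReal_nonneg h1u.le h1u.le, aux_inv_cpow hu0]
    have eA : (u : ℂ) ^ ((s + w - 1) - 1) = (u : ℂ) ^ (w - 3 / 2) * (u : ℂ) ^ (-(1 / 2 - s)) := by
      rw [← Complex.cpow_add _ _ hu0']; congr 1; ring
    have eB : ((1 + u : ℝ) : ℂ) ^ (-((s + w - 1) + (s - w)))
        = ((1 + u : ℝ) : ℂ) ^ (1 / 2 - s) * ((1 + u : ℝ) : ℂ) ^ (1 / 2 - s) := by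
      rw [← Complex.cpow_add _ _ h1u']; congr 1; ring
    rw [eA, eB]
    ring
  rw [key, beta_Ioi h1 h2]
  have h3 : (s + w - 1) + (s - w) = 2 * s - 1 := by ring
  rw [h3]
end

section
/- Let K_v(y) = (1/2) * Integral_0^infty exp(-(1/2)*y*(u + u^{-1})) * u^{v-1} du. For complex xi and v with Re(xi) > |Re(v)|, the Mellin transform Integral_0^infty K_v(y) * y^{xi - 1} dy equals 2^{xi - 2} * Gamma((xi + v)/2) * Gamma((xi - v)/2). -/
open MeasureTheory

open Set Complex

lemma aux_cont {c σ : ℝ} (s : Set ℝ) (hs : s ⊆ Set.Ioi 0) (hsm : MeasurableSet s) :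
    AEStronglyMeasurable (fun t : ℝ => Real.exp (-(t + c / t)) * t ^ (σ - 1))
      (volume.restrict s) := by
  apply ContinuousOn.aestronglyMeasurable ?_ hsm
  intro t ht
  have ht0 : (0:ℝ) < t := hs ht
  apply ContinuousWithinAt.mul
  · exact (Real.continuous_exp.continuousAt.comp
      ((continuousAt_id.add (continuousAt_const.div continuousAt_id ht0.ne')).neg)).continuousWithinAt
  · exact (Real.continuousAt_rpow_const _ _ (Or.inl ht0.ne')).continuousWithinAt

/-- Integrability of `t ↦ exp(-(t + c/t)) t^(σ-1)` on `(0,∞)` for `c > 0`, any real `σ`. -/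
lemma aux_int_real {c σ : ℝ} (hc : 0 < c) :
    IntegrableOn (fun t : ℝ => Real.exp (-(t + c / t)) * t ^ (σ - 1)) (Set.Ioi 0) := by
  rw [← Set.Ioc_union_Ioi_eq_Ioi (zero_le_one (α := ℝ)), integrableOn_union]
  constructor
  · -- bounded by a constant on (0,1]
    obtain ⟨n, hn⟩ := exists_nat_ge (1 - σ)
    refine Integrable.mono' (integrable_const ((n.factorial : ℝ) / c ^ n))
      (aux_cont _ Set.Ioc_subset_Ioi_self measurableSet_Ioc) ?_
    rw [ae_restrict_iff' measurableSet_Ioc]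
    filter_upwards with t ht
    obtain ⟨ht0, ht1⟩ := ht
    have h1 : Real.exp (-(t + c / t)) ≤ Real.exp (-(c / t)) := by
      apply Real.exp_le_exp.mpr; nlinarith
    have e1 : Real.exp (-(c / t)) ≤ (n.factorial : ℝ) * t ^ n / c ^ n := by
      have hpos : (0:ℝ) < (c / t) ^ n / n.factorial := by positivity
      have h := Real.pow_div_factorial_le_exp _ (div_pos hc ht0).le n
      have h2 := one_div_le_one_div_of_le hpos h
      rw [Real.exp_neg, ← one_div]
      refine h2.trans_eq ?_
      rw [div_pow]
      field_simp
    have hnn : 0 ≤ t ^ (σ - 1) := Real.rpow_nonneg ht0.le _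
    rw [Real.norm_eq_abs, _root_.abs_of_nonneg (by positivity)]
    calc Real.exp (-(t + c / t)) * t ^ (σ - 1)
        ≤ ((n.factorial : ℝ) * t ^ n / c ^ n) * t ^ (σ - 1) :=
          mul_le_mul (h1.trans e1) le_rfl hnn (by positivity)
      _ = (n.factorial : ℝ) / c ^ n * (t ^ (n : ℝ) * t ^ (σ - 1)) := by
          rw [Real.rpow_natCast t n]; ring
      _ = (n.factorial : ℝ) / c ^ n * t ^ ((n : ℝ) + (σ - 1)) := by
          rw [← Real.rpow_add ht0]
      _ ≤ (n.factorial : ℝ) / c ^ n * 1 := by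
          refine mul_le_mul_of_nonneg_left ?_ (by positivity)
          exact Real.rpow_le_one ht0.le ht1 (by linarith)
      _ = (n.factorial : ℝ) / c ^ n := mul_one _
  · -- dominated by `exp(-t) t^m` on `(1,∞)`
    obtain ⟨m, hm⟩ := exists_nat_ge σ
    refine Integrable.mono'
      (((Real.GammaIntegral_convergent (s := (m:ℝ) + 1) (by positivity)).mono_set
        (Set.Ioi_subset_Ioi zero_le_one)))
      (aux_cont _ (fun x hx => Set.mem_Ioi.mpr (lt_trans zero_lt_one hx)) measurableSet_Ioi) ?_
    rw [ae_restrict_iff' measurableSet_Ioi]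
    filter_upwards with t ht
    rw [Set.mem_Ioi] at ht
    have ht0 : (0:ℝ) < t := lt_trans zero_lt_one ht
    rw [Real.norm_eq_abs, _root_.abs_of_nonneg (by positivity)]
    have h1 : Real.exp (-(t + c / t)) ≤ Real.exp (-t) := by
      apply Real.exp_le_exp.mpr
      have : 0 < c / t := div_pos hc ht0
      linarith
    calc Real.exp (-(t + c / t)) * t ^ (σ - 1)
        ≤ Real.exp (-t) * t ^ ((m:ℝ) + 1 - 1) :=
          mul_le_mul h1 (Real.rpow_le_rpow_of_exponent_le ht.le (by linarith))
            (Real.rpow_nonneg ht0.le _) (Real.exp_pos _).le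
      _ = _ := rfl

/-- `∫_0^∞ exp(-(y²/(4t))) y^{2a-1} dy = (1/2) (4t)^a Γ(a)` for `t > 0`, `re a > 0`. -/
lemma step2C {t : ℝ} (ht : 0 < t) {a : ℂ} (ha : 0 < a.re) :
    ∫ y in Set.Ioi (0:ℝ), Complex.exp ((-(y ^ 2 / (4 * t)) : ℝ) : ℂ) * (y:ℂ) ^ (2 * a - 1)
      = (1 / 2) * ((4 * t : ℝ) : ℂ) ^ a * Complex.Gamma a := by
  have h4t : (0:ℝ) < 4 * t := by linarith
  have key := integral_comp_rpow_Ioi_of_pos (p := 2)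
    (g := fun x : ℝ => ((1 : ℂ) / 2) * ((x:ℝ):ℂ) ^ (a - 1) * Complex.exp ((-(x / (4 * t)) : ℝ) : ℂ))
    two_pos
  have heq : ∀ y ∈ Set.Ioi (0:ℝ),
      Complex.exp ((-(y ^ 2 / (4 * t)) : ℝ) : ℂ) * (y:ℂ) ^ (2 * a - 1)
        = (2 * y ^ ((2:ℝ) - 1)) •
            ((1 : ℂ) / 2 * (((y ^ (2:ℝ) : ℝ)):ℂ) ^ (a - 1)
              * Complex.exp ((-((y ^ (2:ℝ)) / (4 * t)) : ℝ) : ℂ)) := by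
    intro y hy
    rw [Set.mem_Ioi] at hy
    have hy' : ((y:ℂ)) ≠ 0 := Complex.ofReal_ne_zero.mpr hy.ne'
    have h1 : (y:ℝ) ^ ((2:ℝ) - 1) = y := by norm_num
    have h2 : (y:ℝ) ^ (2:ℝ) = y ^ 2 := by
      rw [← Real.rpow_natCast y 2]; norm_num
    rw [h1, h2]
    have h3 : ((y ^ 2 : ℝ) : ℂ) ^ (a - 1) = (y:ℂ) ^ (a - 1) * (y:ℂ) ^ (a - 1) := by
      rw [sq, Complex.ofReal_mul, Complex.mul_cpow_ofReal_nonneg hy.le hy.le]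
    have h4 : (y:ℂ) ^ (2 * a - 1) = (y:ℂ) * ((y:ℂ) ^ (a - 1) * (y:ℂ) ^ (a - 1)) := by
      have he : 2 * a - 1 = 1 + ((a - 1) + (a - 1)) := by ring
      rw [he, Complex.cpow_add _ _ hy', Complex.cpow_add _ _ hy', Complex.cpow_one]
    rw [h3, h4, real_smul]
    push_cast
    ring
  rw [setIntegral_congr_fun measurableSet_Ioi heq, key]
  have heq2 : ∀ x ∈ Set.Ioi (0:ℝ),
      (1 : ℂ) / 2 * ((x:ℝ):ℂ) ^ (a - 1) * Complex.exp ((-(x / (4 * t)) : ℝ) : ℂ)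
        = (1 : ℂ) / 2 * (((x:ℝ):ℂ) ^ (a - 1)
            * Complex.exp (-((((4 * t)⁻¹ : ℝ) : ℂ) * (x:ℂ)))) := by
    intro x hx
    have harg : ((-(x / (4 * t)) : ℝ) : ℂ) = -((((4 * t)⁻¹ : ℝ) : ℂ) * (x:ℂ)) := by
      push_cast
      field_simp
    rw [harg]; ring
  rw [setIntegral_congr_fun measurableSet_Ioi heq2, MeasureTheory.integral_const_mul,
    integral_cpow_mul_exp_neg_mul_Ioi ha (inv_pos.mpr h4t)]
  have hbase : ((1:ℂ) / (((4 * t)⁻¹ : ℝ) : ℂ)) = ((4 * t : ℝ) : ℂ) := by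
    push_cast
    field_simp
  rw [hbase]
  ring

/-- Real version: `∫_0^∞ exp(-(y²/(4t))) y^{2s-1} dy = (1/2) (4t)^s Γ(s)`. -/
lemma step2R {t : ℝ} (ht : 0 < t) {s : ℝ} (hs : 0 < s) :
    ∫ y in Set.Ioi (0:ℝ), Real.exp (-(y ^ 2 / (4 * t))) * y ^ (2 * s - 1)
      = (1 / 2) * (4 * t) ^ s * Real.Gamma s := by
  have h4t : (0:ℝ) < 4 * t := by linarith
  have key := integral_comp_rpow_Ioi_of_pos (p := 2)
    (g := fun x : ℝ => ((1 : ℝ) / 2) * x ^ (s - 1) * Real.exp (-(x / (4 * t))))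
    two_pos
  have heq : ∀ y ∈ Set.Ioi (0:ℝ),
      Real.exp (-(y ^ 2 / (4 * t))) * y ^ (2 * s - 1)
        = (2 * y ^ ((2:ℝ) - 1)) •
            ((1 : ℝ) / 2 * (y ^ (2:ℝ)) ^ (s - 1) * Real.exp (-((y ^ (2:ℝ)) / (4 * t)))) := by
    intro y hy
    rw [Set.mem_Ioi] at hy
    have h1 : (y:ℝ) ^ ((2:ℝ) - 1) = y := by norm_num
    have h2 : (y:ℝ) ^ (2:ℝ) = y ^ 2 := by
      rw [← Real.rpow_natCast y 2]; norm_num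
    rw [h1, h2]
    have h3 : ((y ^ 2 : ℝ)) ^ (s - 1) = y ^ (s - 1) * y ^ (s - 1) := by
      rw [sq, Real.mul_rpow hy.le hy.le]
    have h4 : (y:ℝ) ^ (2 * s - 1) = y * (y ^ (s - 1) * y ^ (s - 1)) := by
      have he : 2 * s - 1 = 1 + ((s - 1) + (s - 1)) := by ring
      rw [he, Real.rpow_add hy, Real.rpow_add hy, Real.rpow_one]
    rw [h3, h4, smul_eq_mul]
    ring
  rw [setIntegral_congr_fun measurableSet_Ioi heq, key]
  have heq2 : ∀ x ∈ Set.Ioi (0:ℝ),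
      (1 : ℝ) / 2 * x ^ (s - 1) * Real.exp (-(x / (4 * t)))
        = (1 : ℝ) / 2 * (x ^ (s - 1) * Real.exp (-((4 * t)⁻¹ * x))) := by
    intro x hx
    rw [show -(x / (4 * t)) = -((4 * t)⁻¹ * x) by field_simp]
    ring
  rw [setIntegral_congr_fun measurableSet_Ioi heq2, MeasureTheory.integral_const_mul,
    Real.integral_rpow_mul_exp_neg_mul_Ioi hs (inv_pos.mpr h4t)]
  rw [show (1 / (4 * t)⁻¹) = 4 * t by field_simp]
  ring

/-- The K-Bessel function `K_v(y) = (1/2) ∫_0^∞ exp(-(1/2) y (u + u⁻¹)) u^{v-1} du`. -/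
noncomputable def Kbessel (v : ℂ) (y : ℝ) : ℂ :=
  (1 / 2) * ∫ u in Set.Ioi (0 : ℝ),
    Complex.exp (-(1 / 2 : ℂ) * (y : ℂ) * ((u : ℂ) + (u : ℂ)⁻¹)) * (u : ℂ) ^ (v - 1)


lemma step1 (v : ℂ) {y : ℝ} (hy : 0 < y) :
    Kbessel v y = (1 / 2) * ((2 / y : ℝ) : ℂ) ^ v *
      ∫ t in Set.Ioi (0:ℝ),
        Complex.exp ((-(t + y ^ 2 / (4 * t)) : ℝ) : ℂ) * (t:ℂ) ^ (v - 1) := by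
  set F : ℝ → ℂ := fun u =>
    Complex.exp (-(1 / 2 : ℂ) * (y : ℂ) * ((u : ℂ) + (u : ℂ)⁻¹)) * (u : ℂ) ^ (v - 1) with hF
  have hb : (0:ℝ) < 2 / y := div_pos two_pos hy
  have hsub := integral_comp_mul_left_Ioi F 0 hb
  rw [mul_zero] at hsub
  have h5 : ∫ u in Set.Ioi (0:ℝ), F u = (2 / y) • ∫ t in Set.Ioi (0:ℝ), F ((2 / y) * t) := by
    rw [hsub, smul_smul, mul_inv_cancel₀ hb.ne', one_smul]
  have heq : ∀ t ∈ Set.Ioi (0:ℝ),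
      F ((2 / y) * t) = ((2 / y : ℝ) : ℂ) ^ (v - 1) *
        (Complex.exp ((-(t + y ^ 2 / (4 * t)) : ℝ) : ℂ) * (t:ℂ) ^ (v - 1)) := by
    intro t ht
    rw [Set.mem_Ioi] at ht
    have hy' : ((y:ℂ)) ≠ 0 := Complex.ofReal_ne_zero.mpr hy.ne'
    have ht' : ((t:ℂ)) ≠ 0 := Complex.ofReal_ne_zero.mpr ht.ne'
    have harg : -(1 / 2 : ℂ) * (y : ℂ) * ((((2 / y * t : ℝ)):ℂ) + (((2 / y * t : ℝ)):ℂ)⁻¹)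
        = ((-(t + y ^ 2 / (4 * t)) : ℝ) : ℂ) := by
      push_cast
      field_simp
      ring
    rw [hF]
    simp only []
    rw [harg, Complex.ofReal_mul, Complex.mul_cpow_ofReal_nonneg hb.le ht.le]
    ring
  rw [Kbessel, h5, setIntegral_congr_fun measurableSet_Ioi heq,
    MeasureTheory.integral_const_mul, real_smul]
  have hpow : ((2 / y : ℝ) : ℂ) ^ v = ((2 / y : ℝ) : ℂ) * ((2 / y : ℝ) : ℂ) ^ (v - 1) := by
    nth_rewrite 1 [show v = 1 + (v - 1) by ring]
    rw [Complex.cpow_add _ _ (Complex.ofReal_ne_zero.mpr hb.ne'), Complex.cpow_one]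
  rw [hpow]
  ring

lemma normH {v a : ℂ} {y t : ℝ} (hy : 0 < y) (ht : 0 < t) :
    ‖Complex.exp ((-(t + y ^ 2 / (4 * t)) : ℝ) : ℂ) * (t:ℂ) ^ (v - 1) * (y:ℂ) ^ (2 * a - 1)‖
      = Real.exp (-(t + y ^ 2 / (4 * t))) * t ^ (v.re - 1) * y ^ (2 * a.re - 1) := by
  rw [norm_mul, norm_mul,
    Complex.norm_exp, Complex.norm_cpow_eq_rpow_re_of_pos ht, Complex.norm_cpow_eq_rpow_re_of_pos hy]
  have h1 : (v - 1).re = v.re - 1 := by simp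
  have h2 : (2 * a - 1).re = 2 * a.re - 1 := by simp
  rw [h1, h2, Complex.ofReal_re]

lemma contH (v a : ℂ) :
    ContinuousOn (fun p : ℝ × ℝ =>
      Complex.exp ((-(p.2 + p.1 ^ 2 / (4 * p.2)) : ℝ) : ℂ) * ((p.2:ℝ):ℂ) ^ (v - 1)
        * ((p.1:ℝ):ℂ) ^ (2 * a - 1))
      (Set.Ioi 0 ×ˢ Set.Ioi 0) := by
  intro p hp
  obtain ⟨hp1, hp2⟩ := hp
  rw [Set.mem_Ioi] at hp1 hp2
  apply ContinuousAt.continuousWithinAt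
  have h4 : (4 : ℝ) * p.2 ≠ 0 := by positivity
  refine ContinuousAt.mul (ContinuousAt.mul ?_ ?_) ?_
  · exact Complex.continuous_exp.continuousAt.comp <| Complex.continuous_ofReal.continuousAt.comp
      (((continuousAt_snd.add ((continuousAt_fst.pow 2).div
        (continuousAt_const.mul continuousAt_snd) h4)).neg))
  · exact (Complex.continuousAt_ofReal_cpow_const _ _ (Or.inr hp2.ne')).comp continuousAt_snd
  · exact (Complex.continuousAt_ofReal_cpow_const _ _ (Or.inr hp1.ne')).comp continuousAt_fst

lemma aux_cont' {c σ : ℝ} (s : Set ℝ) (hs : s ⊆ Set.Ioi 0) (hsm : MeasurableSet s) :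
    AEStronglyMeasurable (fun t : ℝ => Real.exp (-(t + c / t)) * t ^ (σ - 1))
      (volume.restrict s) := by
  apply ContinuousOn.aestronglyMeasurable ?_ hsm
  intro t ht
  have ht0 : (0:ℝ) < t := hs ht
  apply ContinuousWithinAt.mul
  · exact (Real.continuous_exp.continuousAt.comp
      ((continuousAt_id.add (continuousAt_const.div continuousAt_id ht0.ne')).neg)).continuousWithinAt
  · exact (Real.continuousAt_rpow_const _ _ (Or.inl ht0.ne')).continuousWithinAt

lemma keyIntegrable (v a : ℂ) (ha : 0 < a.re) (hva : 0 < v.re + a.re) :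
    Integrable (Function.uncurry fun y t : ℝ =>
      Complex.exp ((-(t + y ^ 2 / (4 * t)) : ℝ) : ℂ) * (t:ℂ) ^ (v - 1) * (y:ℂ) ^ (2 * a - 1))
      ((volume.restrict (Set.Ioi 0)).prod (volume.restrict (Set.Ioi 0))) := by
  have hmeas : AEStronglyMeasurable (Function.uncurry fun y t : ℝ =>
      Complex.exp ((-(t + y ^ 2 / (4 * t)) : ℝ) : ℂ) * (t:ℂ) ^ (v - 1) * (y:ℂ) ^ (2 * a - 1))
      ((volume.restrict (Set.Ioi 0)).prod (volume.restrict (Set.Ioi 0))) := by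
    rw [Measure.prod_restrict, ← Measure.volume_eq_prod]
    exact (contH v a).aestronglyMeasurable (measurableSet_Ioi.prod measurableSet_Ioi)
  rw [integrable_prod_iff' hmeas]
  constructor
  · -- sections in y for a.e. t
    rw [ae_restrict_iff' measurableSet_Ioi]
    filter_upwards with t ht
    rw [Set.mem_Ioi] at ht
    have hb : (0:ℝ) < (4 * t)⁻¹ := by positivity
    refine Integrable.mono'
      (((integrableOn_rpow_mul_exp_neg_mul_sq hb (s := 2 * a.re - 1) (by linarith)).const_mul
        (t ^ (v.re - 1)))) ?_ ?_
    · -- a.e. strong measurability of the y-section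
      apply ContinuousOn.aestronglyMeasurable ?_ measurableSet_Ioi
      intro y hy
      rw [Set.mem_Ioi] at hy
      apply ContinuousAt.continuousWithinAt
      refine ContinuousAt.mul (ContinuousAt.mul ?_ continuousAt_const) ?_
      · exact Complex.continuous_exp.continuousAt.comp <|
          Complex.continuous_ofReal.continuousAt.comp
          ((continuousAt_const.add ((continuousAt_id.pow 2).div continuousAt_const
            (by positivity))).neg)
      · exact (Complex.continuousAt_ofReal_cpow_const _ _ (Or.inr hy.ne')).comp continuousAt_id
    · rw [ae_restrict_iff' measurableSet_Ioi]
      filter_upwards with y hy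
      rw [Set.mem_Ioi] at hy
      simp only [Function.uncurry]
      rw [normH hy ht]
      have h1 : Real.exp (-(t + y ^ 2 / (4 * t))) ≤ Real.exp (-(4 * t)⁻¹ * y ^ 2) := by
        apply Real.exp_le_exp.mpr
        rw [neg_mul, inv_mul_eq_div]
        have h2 : (0:ℝ) < y ^ 2 / (4 * t) := by positivity
        linarith
      calc Real.exp (-(t + y ^ 2 / (4 * t))) * t ^ (v.re - 1) * y ^ (2 * a.re - 1)
          ≤ Real.exp (-(4 * t)⁻¹ * y ^ 2) * t ^ (v.re - 1) * y ^ (2 * a.re - 1) := by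
            apply mul_le_mul_of_nonneg_right (mul_le_mul_of_nonneg_right h1 (by positivity))
              (by positivity)
        _ = t ^ (v.re - 1) * (y ^ (2 * a.re - 1) * Real.exp (-(4 * t)⁻¹ * y ^ 2)) := by ring
  · -- integrability of t ↦ ∫_y ‖·‖
    have hval : ∀ t ∈ Set.Ioi (0:ℝ),
        (∫ y in Set.Ioi (0:ℝ), ‖Complex.exp ((-(t + y ^ 2 / (4 * t)) : ℝ) : ℂ)
            * (t:ℂ) ^ (v - 1) * (y:ℂ) ^ (2 * a - 1)‖)
          = (1 / 2) * 4 ^ a.re * Real.Gamma a.re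
              * (Real.exp (-t) * t ^ (v.re + a.re - 1)) := by
      intro t ht
      rw [Set.mem_Ioi] at ht
      have heq : ∀ y ∈ Set.Ioi (0:ℝ),
          ‖Complex.exp ((-(t + y ^ 2 / (4 * t)) : ℝ) : ℂ)
              * (t:ℂ) ^ (v - 1) * (y:ℂ) ^ (2 * a - 1)‖
            = (Real.exp (-t) * t ^ (v.re - 1))
                * (Real.exp (-(y ^ 2 / (4 * t))) * y ^ (2 * a.re - 1)) := by
        intro y hy
        rw [Set.mem_Ioi] at hy
        rw [normH hy ht, show -(t + y ^ 2 / (4 * t)) = -t + -(y ^ 2 / (4 * t)) by ring,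
          Real.exp_add]
        ring
      rw [setIntegral_congr_fun measurableSet_Ioi heq, MeasureTheory.integral_const_mul,
        step2R ht ha, Real.mul_rpow (by norm_num : (0:ℝ) ≤ 4) ht.le,
        show v.re + a.re - 1 = (v.re - 1) + a.re by ring, Real.rpow_add ht]
      ring
    refine Integrable.congr
      (((Real.GammaIntegral_convergent hva).const_mul
        ((1 / 2) * 4 ^ a.re * Real.Gamma a.re))) ?_
    refine (ae_restrict_iff' measurableSet_Ioi).mpr ?_
    filter_upwards with t ht
    simp only [Function.uncurry]
    rw [← hval t ht]

/-- For `Re(ξ) > |Re(v)|`, the Mellin transform of the K-Bessel function is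
`∫_0^∞ K_v(y) y^{ξ-1} dy = 2^{ξ-2} Γ((ξ+v)/2) Γ((ξ-v)/2)`. -/
theorem stmt_7 (ξ v : ℂ) (h : |v.re| < ξ.re) :
    ∫ y in Set.Ioi (0 : ℝ), Kbessel v y * (y : ℂ) ^ (ξ - 1)
      = (2 : ℂ) ^ (ξ - 2) * Complex.Gamma ((ξ + v) / 2) * Complex.Gamma ((ξ - v) / 2) := by
  obtain ⟨hv1, hv2⟩ := abs_lt.mp h
  set a : ℂ := (ξ - v) / 2 with ha_def
  set b : ℂ := (ξ + v) / 2 with hb_def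
  have ha_re : a.re = (ξ.re - v.re) / 2 := by
    rw [ha_def, show ((2:ℂ)) = ((2:ℝ):ℂ) by norm_num, Complex.div_ofReal_re, Complex.sub_re]
  have hb_re : b.re = (ξ.re + v.re) / 2 := by
    rw [hb_def, show ((2:ℂ)) = ((2:ℝ):ℂ) by norm_num, Complex.div_ofReal_re, Complex.add_re]
  have ha : 0 < a.re := by rw [ha_re]; linarith
  have hbre : 0 < b.re := by rw [hb_re]; linarith
  have hva : 0 < v.re + a.re := by rw [ha_re]; linarith
  have hKint := keyIntegrable v a ha hva
  set c0 : ℂ := (1 / 2) * (2:ℂ) ^ v with hc0_def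
  -- Step A : rewrite as a double integral
  have hA : (∫ y in Set.Ioi (0:ℝ), Kbessel v y * (y : ℂ) ^ (ξ - 1))
      = ∫ y in Set.Ioi (0:ℝ), ∫ t in Set.Ioi (0:ℝ),
          c0 * (Complex.exp ((-(t + y ^ 2 / (4 * t)) : ℝ) : ℂ) * (t:ℂ) ^ (v - 1)
            * (y:ℂ) ^ (2 * a - 1)) := by
    refine setIntegral_congr_fun measurableSet_Ioi (fun y hy => ?_)
    rw [Set.mem_Ioi] at hy
    have hyC : ((y:ℂ)) ≠ 0 := Complex.ofReal_ne_zero.mpr hy.ne'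
    rw [step1 v hy]
    have hcp : ((2 / y : ℝ):ℂ) ^ v * (y:ℂ) ^ (ξ - 1) = (2:ℂ) ^ v * (y:ℂ) ^ (2 * a - 1) := by
      rw [div_eq_mul_inv, Complex.ofReal_mul, Complex.mul_cpow_ofReal_nonneg (by norm_num)
          (inv_nonneg.mpr hy.le), Complex.ofReal_inv,
        Complex.inv_cpow _ _ (by simp [Complex.arg_ofReal_of_nonneg hy.le, Real.pi_ne_zero.symm]),
        ← Complex.cpow_neg, mul_assoc,
        ← Complex.cpow_add _ _ hyC, show -v + (ξ - 1) = 2 * a - 1 by rw [ha_def]; ring,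
        show ((2:ℝ):ℂ) = 2 by norm_num]
    rw [show ((1:ℂ)/2) * ((2 / y : ℝ):ℂ) ^ v
          * (∫ t in Set.Ioi (0:ℝ),
              Complex.exp ((-(t + y ^ 2 / (4 * t)) : ℝ) : ℂ) * (t:ℂ) ^ (v - 1)) * (y:ℂ) ^ (ξ - 1)
        = (1/2) * (((2 / y : ℝ):ℂ) ^ v * (y:ℂ) ^ (ξ - 1))
          * ∫ t in Set.Ioi (0:ℝ),
              Complex.exp ((-(t + y ^ 2 / (4 * t)) : ℝ) : ℂ) * (t:ℂ) ^ (v - 1) from by ring, hcp]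
    rw [show (fun t : ℝ => c0 * (Complex.exp ((-(t + y ^ 2 / (4 * t)) : ℝ) : ℂ) * (t:ℂ) ^ (v - 1)
            * (y:ℂ) ^ (2 * a - 1)))
        = fun t : ℝ => (c0 * (y:ℂ) ^ (2 * a - 1))
            * (Complex.exp ((-(t + y ^ 2 / (4 * t)) : ℝ) : ℂ) * (t:ℂ) ^ (v - 1)) from
        funext fun t => by ring, MeasureTheory.integral_const_mul, hc0_def]
    ring
  rw [hA, MeasureTheory.integral_integral_swap (hKint.const_mul c0)]
  -- Step B : evaluate the inner integral over y
  have hB : ∀ t ∈ Set.Ioi (0:ℝ),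
      (∫ y in Set.Ioi (0:ℝ), c0 * (Complex.exp ((-(t + y ^ 2 / (4 * t)) : ℝ) : ℂ)
          * (t:ℂ) ^ (v - 1) * (y:ℂ) ^ (2 * a - 1)))
        = (c0 * (1/2) * Complex.Gamma a * ((4:ℝ):ℂ) ^ a)
            * (Complex.exp ((-t : ℝ) : ℂ) * (t:ℂ) ^ (b - 1)) := by
    intro t ht
    rw [Set.mem_Ioi] at ht
    have htC : ((t:ℂ)) ≠ 0 := Complex.ofReal_ne_zero.mpr ht.ne'
    have hsplit : ∀ y : ℝ, Complex.exp ((-(t + y ^ 2 / (4 * t)) : ℝ) : ℂ)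
        = Complex.exp ((-t : ℝ) : ℂ) * Complex.exp ((-(y ^ 2 / (4 * t)) : ℝ) : ℂ) := by
      intro y
      rw [← Complex.exp_add]
      congr 1
      push_cast
      ring
    rw [show (fun y : ℝ => c0 * (Complex.exp ((-(t + y ^ 2 / (4 * t)) : ℝ) : ℂ)
            * (t:ℂ) ^ (v - 1) * (y:ℂ) ^ (2 * a - 1)))
        = fun y : ℝ => (c0 * (t:ℂ) ^ (v - 1) * Complex.exp ((-t : ℝ) : ℂ))
            * (Complex.exp ((-(y ^ 2 / (4 * t)) : ℝ) : ℂ) * (y:ℂ) ^ (2 * a - 1)) from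
        funext fun y => by rw [hsplit y]; ring,
      MeasureTheory.integral_const_mul, step2C ht ha]
    have h4 : ((4 * t : ℝ) : ℂ) ^ a = ((4:ℝ):ℂ) ^ a * ((t:ℝ):ℂ) ^ a := by
      rw [Complex.ofReal_mul, Complex.mul_cpow_ofReal_nonneg (by norm_num) ht.le]
    have ht2 : (t:ℂ) ^ (v - 1) * (t:ℂ) ^ a = (t:ℂ) ^ (b - 1) := by
      rw [← Complex.cpow_add _ _ htC, show v - 1 + a = b - 1 by rw [ha_def, hb_def]; ring]
    rw [h4]
    calc (c0 * (t:ℂ) ^ (v - 1) * Complex.exp ((-t : ℝ) : ℂ))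
          * (1 / 2 * (((4:ℝ):ℂ) ^ a * ((t:ℝ):ℂ) ^ a) * Complex.Gamma a)
        = (c0 * (1/2) * Complex.Gamma a * ((4:ℝ):ℂ) ^ a)
            * (Complex.exp ((-t : ℝ) : ℂ) * ((t:ℂ) ^ (v - 1) * (t:ℂ) ^ a)) := by ring
      _ = _ := by rw [ht2]
  rw [setIntegral_congr_fun measurableSet_Ioi hB, MeasureTheory.integral_const_mul]
  -- Step C : the remaining t-integral is Γ(b)
  have hGb : (∫ t in Set.Ioi (0:ℝ), Complex.exp ((-t : ℝ) : ℂ) * (t:ℂ) ^ (b - 1))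
      = Complex.Gamma b := by
    rw [Complex.Gamma_eq_integral hbre, Complex.GammaIntegral]
    refine setIntegral_congr_fun measurableSet_Ioi (fun t ht => ?_)
    rw [Complex.ofReal_exp]
  rw [hGb]
  -- Step D : constants
  have haa : a + a = ξ - v := by rw [ha_def]; ring
  have h4a : ((4:ℝ):ℂ) ^ a = (2:ℂ) ^ a * (2:ℂ) ^ a := by
    rw [show ((4:ℝ)) = 2 * 2 by norm_num, Complex.ofReal_mul,
      Complex.mul_cpow_ofReal_nonneg (by norm_num) (by norm_num),
      show ((2:ℝ):ℂ) = 2 by norm_num]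
  have h2v : (2:ℂ) ^ v * ((2:ℂ) ^ a * (2:ℂ) ^ a) = (2:ℂ) ^ ξ := by
    rw [← Complex.cpow_add _ _ two_ne_zero, ← Complex.cpow_add _ _ two_ne_zero,
      show v + (a + a) = ξ by rw [haa]; ring]
  have hξ2 : (2:ℂ) ^ ξ = (2:ℂ) ^ (ξ - 2) * 4 := by
    rw [show ξ = (ξ - 2) + 2 by ring, Complex.cpow_add _ _ two_ne_zero]
    norm_num [Complex.cpow_two]
  rw [hc0_def, h4a]
  calc 1 / 2 * (2:ℂ) ^ v * (1 / 2) * Complex.Gamma a * ((2:ℂ) ^ a * (2:ℂ) ^ a)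
        * Complex.Gamma b
      = ((2:ℂ) ^ v * ((2:ℂ) ^ a * (2:ℂ) ^ a)) * (1/4) * Complex.Gamma b * Complex.Gamma a := by
        ring
    _ = (2:ℂ) ^ (ξ - 2) * Complex.Gamma b * Complex.Gamma a := by
        rw [h2v, hξ2]; ring
end

section
/- Let a : N -> C be a multiplicative arithmetic function satisfying the Hecke relations a(m)*a(d) = Sum over r dividing gcd(m,d) of r * a(m*d/r^2) for all positive integers m, d. Let chi be a Dirichlet character. Then, assuming absolute convergence of all series involved (i.e., Re(z1), Re(z2) sufficiently negative), (Sum_{d>=1} Sum_{m>=1} chi(d) d^{z1} m^{z2} a(m) a(d)) = (Sum_{r>=1} chi(r) r^{1+z1+z2}) * (Sum_{d>=1} Sum_{m>=1} chi(d) d^{z1} m^{z2} a(m*d)). -/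
open Finset

/-- The reindexing map `(r,(d',m')) ↦ (r d', r m')`. -/
def psiMap : ℕ+ × (ℕ+ × ℕ+) → ℕ+ × ℕ+ := fun q => (q.1 * q.2.1, q.1 * q.2.2)

/-- Hecke-relation manipulation: if `a : ℕ → ℂ` is multiplicative and satisfies the Hecke
relations `a(m) a(d) = ∑_{r ∣ gcd(m,d)} r a(md/r²)`, and `χ` is a Dirichlet character, then
(assuming absolute convergence of all series involved)
`∑_{d,m ≥ 1} χ(d) d^{z₁} m^{z₂} a(m) a(d)
  = (∑_{r ≥ 1} χ(r) r^{1+z₁+z₂}) (∑_{d,m ≥ 1} χ(d) d^{z₁} m^{z₂} a(md))`. -/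
theorem stmt_9 (N : ℕ) (χ : DirichletCharacter ℂ N) (a : ℕ → ℂ)
    (hmul : ∀ m n : ℕ, Nat.Coprime m n → a (m * n) = a m * a n)
    (hHecke : ∀ m d : ℕ, 0 < m → 0 < d →
      a m * a d = ∑ r ∈ (Nat.gcd m d).divisors, (r : ℂ) * a (m * d / r ^ 2))
    (z1 z2 : ℂ)
    (h1 : Summable fun p : ℕ+ × ℕ+ =>
      ‖χ ((p.1 : ℕ) : ZMod N) * ((p.1 : ℕ) : ℂ) ^ z1 * ((p.2 : ℕ) : ℂ) ^ z2
          * a (p.2 : ℕ) * a (p.1 : ℕ)‖)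
    (h2 : Summable fun r : ℕ+ => ‖χ ((r : ℕ) : ZMod N) * ((r : ℕ) : ℂ) ^ (1 + z1 + z2)‖)
    (h3 : Summable fun p : ℕ+ × ℕ+ =>
      ‖χ ((p.1 : ℕ) : ZMod N) * ((p.1 : ℕ) : ℂ) ^ z1 * ((p.2 : ℕ) : ℂ) ^ z2
          * a ((p.2 : ℕ) * (p.1 : ℕ))‖) :
    (∑' d : ℕ+, ∑' m : ℕ+,
        χ ((d : ℕ) : ZMod N) * ((d : ℕ) : ℂ) ^ z1 * ((m : ℕ) : ℂ) ^ z2 * a (m : ℕ) * a (d : ℕ))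
      = (∑' r : ℕ+, χ ((r : ℕ) : ZMod N) * ((r : ℕ) : ℂ) ^ (1 + z1 + z2))
          * ∑' d : ℕ+, ∑' m : ℕ+,
              χ ((d : ℕ) : ZMod N) * ((d : ℕ) : ℂ) ^ z1 * ((m : ℕ) : ℂ) ^ z2
                * a ((m : ℕ) * (d : ℕ)) := by
  classical
  set A : ℕ+ → ℂ := fun r => χ ((r : ℕ) : ZMod N) * ((r : ℕ) : ℂ) ^ (1 + z1 + z2) with hA
  set B : ℕ+ × ℕ+ → ℂ := fun p =>
    χ ((p.1 : ℕ) : ZMod N) * ((p.1 : ℕ) : ℂ) ^ z1 * ((p.2 : ℕ) : ℂ) ^ z2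
      * a ((p.2 : ℕ) * (p.1 : ℕ)) with hB
  set F : ℕ+ × ℕ+ → ℂ := fun p =>
    χ ((p.1 : ℕ) : ZMod N) * ((p.1 : ℕ) : ℂ) ^ z1 * ((p.2 : ℕ) : ℂ) ^ z2
      * a (p.2 : ℕ) * a (p.1 : ℕ) with hF
  set f : ℕ+ × (ℕ+ × ℕ+) → ℂ := fun q => A q.1 * B q.2 with hf
  have hFs : Summable F := Summable.of_norm h1
  have hBs : Summable B := Summable.of_norm h3
  have hfs : Summable f := Summable.of_norm (Summable.mul_norm h2 h3)
  -- the key fiberwise computation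
  have key : ∀ p : ℕ+ × ℕ+, (∑' x : {q : ℕ+ × (ℕ+ × ℕ+) // psiMap q = p}, f x.1) = F p := by
    rintro ⟨D, M⟩
    set n := Nat.gcd (M : ℕ) (D : ℕ) with hn
    have hn0 : n ≠ 0 := Nat.ne_of_gt (Nat.gcd_pos_of_pos_left _ M.pos)
    -- the equiv from divisors of the gcd to the fiber
    have hdvd : ∀ r : ℕ, r ∈ n.divisors → r ∣ (M : ℕ) ∧ r ∣ (D : ℕ) := by
      intro r hr
      have h := (Nat.mem_divisors.mp hr).1
      exact ⟨h.trans (Nat.gcd_dvd_left _ _), h.trans (Nat.gcd_dvd_right _ _)⟩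
    set toFun : {r : ℕ // r ∈ n.divisors} → {q : ℕ+ × (ℕ+ × ℕ+) // psiMap q = (D, M)} :=
      fun x =>
        ⟨(⟨x.1, Nat.pos_of_mem_divisors x.2⟩,
          (⟨(D : ℕ) / x.1, Nat.div_pos (Nat.le_of_dvd D.pos (hdvd x.1 x.2).2)
              (Nat.pos_of_mem_divisors x.2)⟩,
           ⟨(M : ℕ) / x.1, Nat.div_pos (Nat.le_of_dvd M.pos (hdvd x.1 x.2).1)
              (Nat.pos_of_mem_divisors x.2)⟩)), by
          have h1 : x.1 * ((D : ℕ) / x.1) = (D : ℕ) := Nat.mul_div_cancel' (hdvd x.1 x.2).2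
          have h2 : x.1 * ((M : ℕ) / x.1) = (M : ℕ) := Nat.mul_div_cancel' (hdvd x.1 x.2).1
          simp only [psiMap, Prod.mk.injEq]
          constructor <;> · apply Subtype.ext; simpa⟩ with htoFun
    have hbij : Function.Bijective toFun := by
      constructor
      · intro x y h
        exact Subtype.ext
          (congrArg (fun q : {q : ℕ+ × (ℕ+ × ℕ+) // psiMap q = (D, M)} => ((q.1.1 : ℕ))) h)
      · rintro ⟨⟨r, d', m'⟩, hq⟩
        simp only [psiMap, Prod.mk.injEq] at hq
        have hqD : (r : ℕ) * (d' : ℕ) = (D : ℕ) := by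
          rw [← hq.1]; push_cast; ring
        have hqM : (r : ℕ) * (m' : ℕ) = (M : ℕ) := by
          rw [← hq.2]; push_cast; ring
        have hmem : (r : ℕ) ∈ n.divisors :=
          Nat.mem_divisors.mpr ⟨Nat.dvd_gcd ⟨(m' : ℕ), hqM.symm⟩ ⟨(d' : ℕ), hqD.symm⟩, hn0⟩
        refine ⟨⟨(r : ℕ), hmem⟩, ?_⟩
        apply Subtype.ext
        simp only [htoFun]
        refine Prod.ext (Subtype.ext rfl) (Prod.ext ?_ ?_)
        · apply Subtype.ext
          show (D : ℕ) / (r : ℕ) = (d' : ℕ)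
          rw [← hqD, Nat.mul_div_cancel_left _ r.pos]
        · apply Subtype.ext
          show (M : ℕ) / (r : ℕ) = (m' : ℕ)
          rw [← hqM, Nat.mul_div_cancel_left _ r.pos]
    rw [← (Equiv.ofBijective toFun hbij).tsum_eq]
    have hcomp : ∀ x : {r : ℕ // r ∈ n.divisors},
        f ((Equiv.ofBijective toFun hbij) x).1 = χ ((D : ℕ) : ZMod N) * ((D : ℕ) : ℂ) ^ z1 * ((M : ℕ) : ℂ) ^ z2
          * ((x.1 : ℂ) * a ((M : ℕ) * (D : ℕ) / x.1 ^ 2)) := by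
      rintro ⟨r, hr⟩
      obtain ⟨c, hc⟩ := (hdvd r hr).2
      obtain ⟨k, hk⟩ := (hdvd r hr).1
      have hrpos : 0 < r := Nat.pos_of_mem_divisors hr
      have hr0 : ((r : ℕ) : ℂ) ≠ 0 := Nat.cast_ne_zero.mpr hrpos.ne'
      have hDdiv : (D : ℕ) / r = c := by rw [hc, Nat.mul_div_cancel_left _ hrpos]
      have hMdiv : (M : ℕ) / r = k := by rw [hk, Nat.mul_div_cancel_left _ hrpos]
      have hMD : (M : ℕ) * (D : ℕ) / r ^ 2 = k * c := by
        rw [hc, hk, show r * k * (r * c) = k * c * r ^ 2 by ring,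
          Nat.mul_div_cancel _ (by positivity)]
      rw [Equiv.ofBijective_apply]
      show A _ * B _ = _
      simp only [hA, hB, htoFun, PNat.mk_ofNat, PNat.mk_coe]
      rw [hDdiv, hMdiv, hMD, hc, hk]
      push_cast
      rw [map_mul]
      rw [show ((r : ℂ) * c) ^ z1 = (r : ℂ) ^ z1 * (c : ℂ) ^ z1 by
            exact_mod_cast Complex.natCast_mul_natCast_cpow r c z1,
          show ((r : ℂ) * k) ^ z2 = (r : ℂ) ^ z2 * (k : ℂ) ^ z2 by
            exact_mod_cast Complex.natCast_mul_natCast_cpow r k z2,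
          show (1 : ℂ) + z1 + z2 = 1 + z1 + z2 from rfl,
          Complex.cpow_add _ _ hr0, Complex.cpow_add _ _ hr0, Complex.cpow_one]
      ring
    rw [tsum_congr hcomp, Finset.tsum_subtype n.divisors
      (fun r => χ ((D : ℕ) : ZMod N) * ((D : ℕ) : ℂ) ^ z1 * ((M : ℕ) : ℂ) ^ z2
          * ((r : ℂ) * a ((M : ℕ) * (D : ℕ) / r ^ 2))), ← Finset.mul_sum]
    have hhe := hHecke (M : ℕ) (D : ℕ) M.pos D.pos
    rw [← hn] at hhe
    simp only [hF]
    rw [← hhe]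
    ring
  -- assemble everything
  have hsig : Summable (fun s : Σ p : ℕ+ × ℕ+, {q : ℕ+ × (ℕ+ × ℕ+) // psiMap q = p} =>
      f s.2.1) := (Equiv.summable_iff (Equiv.sigmaFiberEquiv psiMap)).mpr hfs
  have step1 : (∑' q : ℕ+ × (ℕ+ × ℕ+), f q) = ∑' p : ℕ+ × ℕ+, F p := by
    rw [← (Equiv.sigmaFiberEquiv psiMap).tsum_eq f]
    have heq : (fun s : Σ p : ℕ+ × ℕ+, {q : ℕ+ × (ℕ+ × ℕ+) // psiMap q = p} =>
        f ((Equiv.sigmaFiberEquiv psiMap) s)) = fun s => f s.2.1 := rfl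
    calc ∑' s, f ((Equiv.sigmaFiberEquiv psiMap) s)
        = ∑' s : Σ p : ℕ+ × ℕ+, {q : ℕ+ × (ℕ+ × ℕ+) // psiMap q = p}, f s.2.1 := by
          rw [heq]
      _ = ∑' p : ℕ+ × ℕ+, ∑' x : {q : ℕ+ × (ℕ+ × ℕ+) // psiMap q = p}, f x.1 :=
          Summable.tsum_sigma hsig
      _ = ∑' p : ℕ+ × ℕ+, F p := tsum_congr key
  calc (∑' d : ℕ+, ∑' m : ℕ+,
        χ ((d : ℕ) : ZMod N) * ((d : ℕ) : ℂ) ^ z1 * ((m : ℕ) : ℂ) ^ z2 * a (m : ℕ) * a (d : ℕ))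
      = ∑' p : ℕ+ × ℕ+, F p := (Summable.tsum_prod hFs).symm
    _ = ∑' q : ℕ+ × (ℕ+ × ℕ+), f q := step1.symm
    _ = ∑' r : ℕ+, ∑' p : ℕ+ × ℕ+, A r * B p := Summable.tsum_prod hfs
    _ = ∑' r : ℕ+, A r * ∑' p : ℕ+ × ℕ+, B p := by
        exact tsum_congr fun r => tsum_mul_left
    _ = (∑' r : ℕ+, A r) * ∑' p : ℕ+ × ℕ+, B p := tsum_mul_right
    _ = (∑' r : ℕ+, A r) * ∑' d : ℕ+, ∑' m : ℕ+, B (d, m) := by rw [Summable.tsum_prod hBs]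
    _ = _ := rfl
end

section
/- Let a : N -> C satisfy the Hecke relations a(m)a(d) = Sum_{r | gcd(m,d)} r * a(md/r^2) and suppose a(n) = O(n^A). Let chi be a Dirichlet character, and define L_f(s) = Sum_{n>=1} a(n) n^{-s}, L_f(s, chi) = Sum_{n>=1} chi(n) a(n) n^{-s}, and L(s, chi) = Sum_{n>=1} chi(n) n^{-s}. Then for s and w with real parts large enough that all series converge absolutely, Sum_{n>=1} a(n) n^{-s-w} * (Sum_{d | n} chi(d) d^{2w-1}) = L_f(s - w + 1, chi) * L_f(w + s) / L(2s, chi). -/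
open Finset ArithmeticFunction
open scoped ArithmeticFunction.Moebius


lemma hecke_moebius (a : ℕ → ℂ)
    (hHecke : ∀ m d : ℕ, 0 < m → 0 < d →
      a m * a d = ∑ r ∈ (Nat.gcd m d).divisors, (r : ℂ) * a (m * d / r ^ 2))
    (m n : ℕ) (hm : 0 < m) (hn : 0 < n) :
    a (m * n) = ∑ r ∈ (Nat.gcd m n).divisors,
      (μ r : ℂ) * r * (a (m / r) * a (n / r)) := by
  set g := Nat.gcd m n with hgdef
  have hg : 0 < g := Nat.gcd_pos_of_pos_left n hm
  have hgm : g ∣ m := Nat.gcd_dvd_left m n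
  have hgn : g ∣ n := Nat.gcd_dvd_right m n
  set G : ℕ → ℂ := fun x => ((g / x : ℕ) : ℂ) * a ((m / (g / x)) * (n / (g / x))) with hGdef
  set F : ℕ → ℂ := fun x => ((g / x : ℕ) : ℂ) * (a (m / (g / x)) * a (n / (g / x))) with hFdef
  have hFG : ∀ x > 0, x ∈ {x : ℕ | x ∣ g} → ∑ i ∈ x.divisors, G i = F x := by
    intro x hx0 hxg
    simp only [Set.mem_setOf_eq] at hxg
    set u := g / x with hudef
    have hux : u * x = g := Nat.div_mul_cancel hxg
    have hu0 : 0 < u := by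
      rcases Nat.eq_zero_or_pos u with h | h
      · rw [h, zero_mul] at hux; omega
      · exact h
    have hum : u ∣ m := dvd_trans ⟨x, hux.symm⟩ hgm
    have hun : u ∣ n := dvd_trans ⟨x, hux.symm⟩ hgn
    have hmu : 0 < m / u := Nat.div_pos (Nat.le_of_dvd hm hum) hu0
    have hnu : 0 < n / u := Nat.div_pos (Nat.le_of_dvd hn hun) hu0
    have hgcd : Nat.gcd (m / u) (n / u) = x := by
      have h1 : m = u * (m / u) := (Nat.mul_div_cancel' hum).symm
      have h2 : n = u * (n / u) := (Nat.mul_div_cancel' hun).symm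
      have : g = u * Nat.gcd (m / u) (n / u) := by
        rw [hgdef]; nth_rewrite 1 [h1, h2]; exact (Nat.gcd_mul_left u _ _)
      apply Nat.eq_of_mul_eq_mul_left hu0
      rw [← this, ← hux, mul_comm]
    have hHk := hHecke (m / u) (n / u) hmu hnu
    rw [hgcd] at hHk
    have key : ∀ r ∈ x.divisors, G (x / r) =
        ((u : ℂ)) * ((r : ℂ) * a ((m / u) * (n / u) / r ^ 2)) := by
      intro r hr
      have hrx : r ∣ x := (Nat.mem_divisors.mp hr).1
      have hr0 : 0 < r := Nat.pos_of_mem_divisors hr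
      have ht : (x / r) * r = x := Nat.div_mul_cancel hrx
      have htpos : 0 < x / r := by
        rcases Nat.eq_zero_or_pos (x / r) with h | h
        · rw [h, zero_mul] at ht; omega
        · exact h
      have hgq : g / (x / r) = u * r := by
        have h5 : g = (x / r) * (u * r) := by
          calc g = u * x := hux.symm
            _ = u * ((x / r) * r) := by rw [ht]
            _ = (x / r) * (u * r) := by ring
        rw [h5, Nat.mul_div_cancel_left _ htpos]
      have hrm : r ∣ m / u := by
        rw [← hgcd] at hrx; exact hrx.trans (Nat.gcd_dvd_left _ _)
      have hrn : r ∣ n / u := by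
        have := (Nat.mem_divisors.mp hr).1
        rw [← hgcd] at this; exact this.trans (Nat.gcd_dvd_right _ _)
      have hdm : m / (u * r) = m / u / r := (Nat.div_div_eq_div_mul m u r).symm
      have hdn : n / (u * r) = n / u / r := (Nat.div_div_eq_div_mul n u r).symm
      have hprod : (m / u / r) * (n / u / r) = (m / u) * (n / u) / r ^ 2 := by
        rw [Nat.div_mul_div_comm hrm hrn, sq]
      simp only [hGdef, hgq, hdm, hdn, hprod]
      push_cast
      ring
    calc ∑ i ∈ x.divisors, G i = ∑ r ∈ x.divisors, G (x / r) :=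
          (Nat.sum_div_divisors x G).symm
      _ = ∑ r ∈ x.divisors, (u : ℂ) * ((r : ℂ) * a ((m / u) * (n / u) / r ^ 2)) :=
          Finset.sum_congr rfl key
      _ = (u : ℂ) * ∑ r ∈ x.divisors, (r : ℂ) * a ((m / u) * (n / u) / r ^ 2) := by
          rw [Finset.mul_sum]
      _ = F x := by rw [hFdef]; simp only [hudef] at hHk ⊢; rw [← hHk]
  have hinv := (sum_eq_iff_sum_mul_moebius_eq_on {x : ℕ | x ∣ g}
      (fun x y hxy hy => dvd_trans hxy hy)).mp hFG g hg (by simp)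
  have hGg : G g = a (m * n) := by
    simp only [hGdef, Nat.div_self hg, Nat.div_one, Nat.cast_one, one_mul]
  rw [← hGg, ← hinv, Nat.sum_divisorsAntidiagonal (fun d e => (μ d : ℂ) * F e)]
  refine Finset.sum_congr rfl fun d hd => ?_
  have hdg : d ∣ g := (Nat.mem_divisors.mp hd).1
  have : g / (g / d) = d := Nat.div_div_self hdg hg.ne'
  simp only [hFdef, this]
  ring


lemma tsum_fiber_mul {M : Type*} [AddCommMonoid M] [TopologicalSpace M] [T2Space M]
    (k : ℕ+) (f : ℕ+ × ℕ+ → M) :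
    (∑' x : (fun p : ℕ+ × ℕ+ => p.1 * p.2) ⁻¹' {k}, f x)
      = ∑ d ∈ (k : ℕ).divisors, f (d.toPNat', ((k : ℕ) / d).toPNat') := by
  let e : {d : ℕ // d ∈ (k : ℕ).divisors} ≃
      ((fun p : ℕ+ × ℕ+ => p.1 * p.2) ⁻¹' {k}) :=
    { toFun := fun d => ⟨(d.1.toPNat', ((k : ℕ) / d.1).toPNat'), by
        have hd := Nat.mem_divisors.mp d.2
        have hd0 : 0 < d.1 := Nat.pos_of_mem_divisors d.2
        have hq0 : 0 < (k : ℕ) / d.1 := Nat.div_pos (Nat.le_of_dvd k.pos hd.1) hd0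
        have : ((d.1.toPNat' * ((k : ℕ) / d.1).toPNat' : ℕ+) : ℕ) = (k : ℕ) := by
          rw [PNat.mul_coe, PNat.toPNat'_coe hd0, PNat.toPNat'_coe hq0,
            Nat.mul_div_cancel' hd.1]
        exact Set.mem_preimage.mpr (Set.mem_singleton_iff.mpr (PNat.coe_injective this))⟩,
      invFun := fun x => ⟨(x.1.1 : ℕ), by
        have hx : x.1.1 * x.1.2 = k := x.2
        have hxn : ((x.1.1 : ℕ)) * ((x.1.2 : ℕ)) = (k : ℕ) := by
          rw [← PNat.mul_coe]; exact congrArg _ hx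
        exact Nat.mem_divisors.mpr ⟨⟨(x.1.2 : ℕ), hxn.symm⟩, k.ne_zero⟩⟩,
      left_inv := fun d => Subtype.ext (by
        simp only [PNat.toPNat'_coe (Nat.pos_of_mem_divisors d.2)]),
      right_inv := fun x => by
        have hx : x.1.1 * x.1.2 = k := x.2
        refine Subtype.ext (Prod.ext ?_ ?_)
        · exact PNat.coe_toPNat' x.1.1
        · have hxn : ((x.1.1 : ℕ)) * ((x.1.2 : ℕ)) = (k : ℕ) := by
            rw [← PNat.mul_coe]; exact congrArg _ hx
          have h1 : (k : ℕ) / (x.1.1 : ℕ) = (x.1.2 : ℕ) := by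
            rw [← hxn, Nat.mul_div_cancel_left _ x.1.1.pos]
          simp only [h1, PNat.coe_toPNat'] }
  rw [← Equiv.tsum_eq e (fun x => f x.val),
    ← Finset.tsum_subtype ((k : ℕ).divisors) (fun d => f (d.toPNat', ((k : ℕ) / d).toPNat'))]
  exact tsum_congr fun c => rfl

lemma tsum_fiber_gcd {M : Type*} [AddCommMonoid M] [TopologicalSpace M] [T2Space M]
    (p : ℕ+ × ℕ+) (f : ℕ+ × ℕ+ × ℕ+ → M) :
    (∑' x : (fun x : ℕ+ × ℕ+ × ℕ+ => (x.1 * x.2.1, x.1 * x.2.2)) ⁻¹' {p}, f x)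
      = ∑ r ∈ (Nat.gcd (p.1 : ℕ) (p.2 : ℕ)).divisors,
          f (r.toPNat', ((p.1 : ℕ) / r).toPNat', ((p.2 : ℕ) / r).toPNat') := by
  have hgpos : 0 < Nat.gcd (p.1 : ℕ) (p.2 : ℕ) := Nat.gcd_pos_of_pos_left _ p.1.pos
  let e : {r : ℕ // r ∈ (Nat.gcd (p.1 : ℕ) (p.2 : ℕ)).divisors} ≃
      ((fun x : ℕ+ × ℕ+ × ℕ+ => (x.1 * x.2.1, x.1 * x.2.2)) ⁻¹' {p}) :=
    { toFun := fun r => ⟨(r.1.toPNat', ((p.1 : ℕ) / r.1).toPNat', ((p.2 : ℕ) / r.1).toPNat'), by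
        have hr := Nat.mem_divisors.mp r.2
        have hr0 : 0 < r.1 := Nat.pos_of_mem_divisors r.2
        have hr1 : r.1 ∣ (p.1 : ℕ) := hr.1.trans (Nat.gcd_dvd_left _ _)
        have hr2 : r.1 ∣ (p.2 : ℕ) := hr.1.trans (Nat.gcd_dvd_right _ _)
        have hq1 : 0 < (p.1 : ℕ) / r.1 := Nat.div_pos (Nat.le_of_dvd p.1.pos hr1) hr0
        have hq2 : 0 < (p.2 : ℕ) / r.1 := Nat.div_pos (Nat.le_of_dvd p.2.pos hr2) hr0
        refine Set.mem_preimage.mpr (Set.mem_singleton_iff.mpr (Prod.ext ?_ ?_))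
        · apply PNat.coe_injective
          rw [PNat.mul_coe, PNat.toPNat'_coe hr0, PNat.toPNat'_coe hq1,
            Nat.mul_div_cancel' hr1]
        · apply PNat.coe_injective
          rw [PNat.mul_coe, PNat.toPNat'_coe hr0, PNat.toPNat'_coe hq2,
            Nat.mul_div_cancel' hr2]⟩,
      invFun := fun x => ⟨(x.1.1 : ℕ), by
        have hx : (x.1.1 * x.1.2.1, x.1.1 * x.1.2.2) = p := x.2
        have hx1 : x.1.1 * x.1.2.1 = p.1 := congrArg Prod.fst hx
        have hx2 : x.1.1 * x.1.2.2 = p.2 := congrArg Prod.snd hx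
        refine Nat.mem_divisors.mpr ⟨Nat.dvd_gcd ⟨(x.1.2.1 : ℕ), ?_⟩ ⟨(x.1.2.2 : ℕ), ?_⟩,
          hgpos.ne'⟩
        · rw [← hx1]; exact (PNat.mul_coe _ _).symm
        · rw [← hx2]; exact (PNat.mul_coe _ _).symm⟩,
      left_inv := fun r => Subtype.ext (by
        simp only [PNat.toPNat'_coe (Nat.pos_of_mem_divisors r.2)]),
      right_inv := fun x => by
        have hx : (x.1.1 * x.1.2.1, x.1.1 * x.1.2.2) = p := x.2
        have hx1 : x.1.1 * x.1.2.1 = p.1 := congrArg Prod.fst hx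
        have hx2 : x.1.1 * x.1.2.2 = p.2 := congrArg Prod.snd hx
        refine Subtype.ext (Prod.ext ?_ (Prod.ext ?_ ?_))
        · exact PNat.coe_toPNat' x.1.1
        · have h1 : (p.1 : ℕ) / (x.1.1 : ℕ) = (x.1.2.1 : ℕ) := by
            rw [← hx1, PNat.mul_coe, Nat.mul_div_cancel_left _ x.1.1.pos]
          simp only [h1, PNat.coe_toPNat']
        · have h2 : (p.2 : ℕ) / (x.1.1 : ℕ) = (x.1.2.2 : ℕ) := by
            rw [← hx2, PNat.mul_coe, Nat.mul_div_cancel_left _ x.1.1.pos]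
          simp only [h2, PNat.coe_toPNat'] }
  rw [← Equiv.tsum_eq e (fun x => f x.val),
    ← Finset.tsum_subtype ((Nat.gcd (p.1 : ℕ) (p.2 : ℕ)).divisors)
      (fun r => f (r.toPNat', ((p.1 : ℕ) / r).toPNat', ((p.2 : ℕ) / r).toPNat'))]
  exact tsum_congr fun c => rfl


set_option maxHeartbeats 1000000 in
/-- If `a : ℕ → ℂ` satisfies the Hecke relations and `a(n) = O(n^A)`, and `χ` is a Dirichlet
character, then in the region of absolute convergence
`∑_{n ≥ 1} a(n) n^{-s-w} ∑_{d ∣ n} χ(d) d^{2w-1} = L_f(s-w+1, χ) L_f(w+s) / L(2s, χ)`. -/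
theorem stmt_10 (N : ℕ) (χ : DirichletCharacter ℂ N) (a : ℕ → ℂ) (A C : ℝ)
    (hmul : ∀ m n : ℕ, Nat.Coprime m n → a (m * n) = a m * a n)
    (hHecke : ∀ m d : ℕ, 0 < m → 0 < d →
      a m * a d = ∑ r ∈ (Nat.gcd m d).divisors, (r : ℂ) * a (m * d / r ^ 2))
    (hbound : ∀ n : ℕ, 0 < n → ‖a n‖ ≤ C * (n : ℝ) ^ A)
    (s w : ℂ)
    (h1 : Summable fun n : ℕ+ =>
      ‖a (n : ℕ) * ((n : ℕ) : ℂ) ^ (-(s + w))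
          * ∑ d ∈ (n : ℕ).divisors, χ (d : ZMod N) * (d : ℂ) ^ (2 * w - 1)‖)
    (h2 : Summable fun n : ℕ+ =>
      ‖χ ((n : ℕ) : ZMod N) * a (n : ℕ) * ((n : ℕ) : ℂ) ^ (-(s - w + 1))‖)
    (h3 : Summable fun n : ℕ+ => ‖a (n : ℕ) * ((n : ℕ) : ℂ) ^ (-(w + s))‖)
    (h4 : Summable fun n : ℕ+ => ‖χ ((n : ℕ) : ZMod N) * ((n : ℕ) : ℂ) ^ (-(2 * s))‖)
    (hL : (∑' n : ℕ+, χ ((n : ℕ) : ZMod N) * ((n : ℕ) : ℂ) ^ (-(2 * s))) ≠ 0) :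
    (∑' n : ℕ+, a (n : ℕ) * ((n : ℕ) : ℂ) ^ (-(s + w))
        * ∑ d ∈ (n : ℕ).divisors, χ (d : ZMod N) * (d : ℂ) ^ (2 * w - 1))
      = (∑' n : ℕ+, χ ((n : ℕ) : ZMod N) * a (n : ℕ) * ((n : ℕ) : ℂ) ^ (-(s - w + 1)))
          * (∑' n : ℕ+, a (n : ℕ) * ((n : ℕ) : ℂ) ^ (-(w + s)))
          / (∑' n : ℕ+, χ ((n : ℕ) : ZMod N) * ((n : ℕ) : ℂ) ^ (-(2 * s))) := by
  classical
  -- key complex identity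
  have keyC : ∀ r x y : ℕ, 0 < r →
      χ ((r * x : ℕ) : ZMod N) * (((r * x : ℕ)) : ℂ) ^ (-(s - w + 1))
          * (((r * y : ℕ)) : ℂ) ^ (-(w + s)) * (r : ℂ)
        = (χ (r : ZMod N) * (r : ℂ) ^ (-(2 * s))) *
          ((χ (x : ZMod N) * (x : ℂ) ^ (-(s - w + 1))) * ((y : ℂ) ^ (-(w + s)))) := by
    intro r x y hr
    have hrne : (r : ℂ) ≠ 0 := Nat.cast_ne_zero.mpr hr.ne'
    have hpow : (r : ℂ) ^ (-(s - w + 1)) * ((r : ℂ) ^ (-(w + s)) * (r : ℂ)) =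
        (r : ℂ) ^ (-(2 * s)) := by
      nth_rewrite 3 [← Complex.cpow_one (r : ℂ)]
      rw [← Complex.cpow_add _ _ hrne, ← Complex.cpow_add _ _ hrne]
      congr 1
      ring
    push_cast
    rw [Complex.natCast_mul_natCast_cpow, Complex.natCast_mul_natCast_cpow, map_mul]
    linear_combination (χ (r : ZMod N) * χ (x : ZMod N) * (x : ℂ) ^ (-(s - w + 1))
      * (y : ℂ) ^ (-(w + s))) * hpow
  -- Möbius bound
  have habs : ∀ m n : ℕ, 0 < m → 0 < n →
      ‖a (m * n)‖ ≤ ∑ r ∈ (Nat.gcd m n).divisors,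
        (r : ℝ) * (‖a (m / r)‖ * ‖a (n / r)‖) := by
    intro m n hm hn
    rw [hecke_moebius a hHecke m n hm hn]
    refine (norm_sum_le _ _).trans (Finset.sum_le_sum fun r hr => ?_)
    rw [norm_mul, norm_mul, norm_mul]
    have h1 : ‖((ArithmeticFunction.moebius r : ℤ) : ℂ)‖ ≤ 1 := by
      rw [Complex.norm_intCast]
      exact_mod_cast ArithmeticFunction.abs_moebius_le_one
    have h2 : ‖((r : ℕ) : ℂ)‖ = (r : ℝ) := by
      rw [Complex.norm_natCast]
    calc ‖((ArithmeticFunction.moebius r : ℤ) : ℂ)‖ * ‖(r : ℂ)‖ * (‖a (m / r)‖ * ‖a (n / r)‖)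
        ≤ 1 * ‖(r : ℂ)‖ * (‖a (m / r)‖ * ‖a (n / r)‖) := by
          have : (0:ℝ) ≤ ‖(r : ℂ)‖ * (‖a (m / r)‖ * ‖a (n / r)‖) :=
            mul_nonneg (norm_nonneg _) (mul_nonneg (norm_nonneg _) (norm_nonneg _))
          nlinarith [norm_nonneg ((ArithmeticFunction.moebius r : ℤ) : ℂ)]
      _ = (r : ℝ) * (‖a (m / r)‖ * ‖a (n / r)‖) := by rw [one_mul, h2]
  -- summability of the triple norm family
  have hK : Summable (fun x : ℕ+ × ℕ+ × ℕ+ =>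
      ‖(χ (((x.1 : ℕ)) : ZMod N) * ((x.1 : ℕ) : ℂ) ^ (-(2 * s))) *
        ((χ (((x.2.1 : ℕ)) : ZMod N) * a (x.2.1 : ℕ) * ((x.2.1 : ℕ) : ℂ) ^ (-(s - w + 1))) *
          (a (x.2.2 : ℕ) * ((x.2.2 : ℕ) : ℂ) ^ (-(w + s))))‖) :=
    Summable.mul_norm (f := fun n : ℕ+ => χ ((n : ℕ) : ZMod N) * ((n : ℕ) : ℂ) ^ (-(2 * s)))
      (g := fun y : ℕ+ × ℕ+ =>
        (χ ((y.1 : ℕ) : ZMod N) * a (y.1 : ℕ) * ((y.1 : ℕ) : ℂ) ^ (-(s - w + 1))) *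
          (a (y.2 : ℕ) * ((y.2 : ℕ) : ℂ) ^ (-(w + s))))
      h4
      (Summable.mul_norm
        (f := fun n : ℕ+ => χ ((n : ℕ) : ZMod N) * a (n : ℕ) * ((n : ℕ) : ℂ) ^ (-(s - w + 1)))
        (g := fun n : ℕ+ => a (n : ℕ) * ((n : ℕ) : ℂ) ^ (-(w + s))) h2 h3)
  -- summability of the norms of F
  have hFn : Summable (fun p : ℕ+ × ℕ+ =>
      ‖χ (((p.1 : ℕ)) : ZMod N) * a ((p.1 : ℕ) * (p.2 : ℕ)) *
        ((p.1 : ℕ) : ℂ) ^ (-(s - w + 1)) * ((p.2 : ℕ) : ℂ) ^ (-(w + s))‖) := by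
    have hBsum := (hK.hasSum.tsum_fiberwise
      (fun x : ℕ+ × ℕ+ × ℕ+ => (x.1 * x.2.1, x.1 * x.2.2))).summable
    refine Summable.of_nonneg_of_le (fun _ => norm_nonneg _) (fun p => ?_) hBsum
    rw [tsum_fiber_gcd p (fun x : ℕ+ × ℕ+ × ℕ+ =>
      ‖(χ (((x.1 : ℕ)) : ZMod N) * ((x.1 : ℕ) : ℂ) ^ (-(2 * s))) *
        ((χ (((x.2.1 : ℕ)) : ZMod N) * a (x.2.1 : ℕ) * ((x.2.1 : ℕ) : ℂ) ^ (-(s - w + 1))) *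
          (a (x.2.2 : ℕ) * ((x.2.2 : ℕ) : ℂ) ^ (-(w + s))))‖)]
    have hgpos : 0 < Nat.gcd (p.1 : ℕ) (p.2 : ℕ) := Nat.gcd_pos_of_pos_left _ p.1.pos
    calc ‖χ (((p.1 : ℕ)) : ZMod N) * a ((p.1 : ℕ) * (p.2 : ℕ)) *
          ((p.1 : ℕ) : ℂ) ^ (-(s - w + 1)) * ((p.2 : ℕ) : ℂ) ^ (-(w + s))‖
        = ‖a ((p.1 : ℕ) * (p.2 : ℕ))‖ * (‖χ (((p.1 : ℕ)) : ZMod N)‖ *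
            ‖((p.1 : ℕ) : ℂ) ^ (-(s - w + 1))‖ * ‖((p.2 : ℕ) : ℂ) ^ (-(w + s))‖) := by
          rw [norm_mul, norm_mul, norm_mul]; ring
      _ ≤ (∑ r ∈ (Nat.gcd (p.1 : ℕ) (p.2 : ℕ)).divisors,
            (r : ℝ) * (‖a ((p.1 : ℕ) / r)‖ * ‖a ((p.2 : ℕ) / r)‖)) *
            (‖χ (((p.1 : ℕ)) : ZMod N)‖ * ‖((p.1 : ℕ) : ℂ) ^ (-(s - w + 1))‖ *
              ‖((p.2 : ℕ) : ℂ) ^ (-(w + s))‖) := by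
          refine mul_le_mul_of_nonneg_right (habs _ _ p.1.pos p.2.pos) ?_
          positivity
      _ = ∑ r ∈ (Nat.gcd (p.1 : ℕ) (p.2 : ℕ)).divisors,
            ((r : ℝ) * (‖a ((p.1 : ℕ) / r)‖ * ‖a ((p.2 : ℕ) / r)‖)) *
            (‖χ (((p.1 : ℕ)) : ZMod N)‖ * ‖((p.1 : ℕ) : ℂ) ^ (-(s - w + 1))‖ *
              ‖((p.2 : ℕ) : ℂ) ^ (-(w + s))‖) := by
          rw [Finset.sum_mul]
      _ = ∑ r ∈ (Nat.gcd (p.1 : ℕ) (p.2 : ℕ)).divisors,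
            ‖(χ (((r.toPNat' : ℕ)) : ZMod N) * ((r.toPNat' : ℕ) : ℂ) ^ (-(2 * s))) *
              ((χ (((((p.1 : ℕ) / r).toPNat' : ℕ)) : ZMod N) * a (((p.1 : ℕ) / r).toPNat' : ℕ) *
                  ((((p.1 : ℕ) / r).toPNat' : ℕ) : ℂ) ^ (-(s - w + 1))) *
                (a (((p.2 : ℕ) / r).toPNat' : ℕ) *
                  ((((p.2 : ℕ) / r).toPNat' : ℕ) : ℂ) ^ (-(w + s))))‖ := by
          refine Finset.sum_congr rfl fun r hr => ?_
          have hr0 : 0 < r := Nat.pos_of_mem_divisors hr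
          have hrd := Nat.dvd_of_mem_divisors hr
          have hr1 : r ∣ (p.1 : ℕ) := hrd.trans (Nat.gcd_dvd_left _ _)
          have hr2 : r ∣ (p.2 : ℕ) := hrd.trans (Nat.gcd_dvd_right _ _)
          have hq1 : 0 < (p.1 : ℕ) / r := Nat.div_pos (Nat.le_of_dvd p.1.pos hr1) hr0
          have hq2 : 0 < (p.2 : ℕ) / r := Nat.div_pos (Nat.le_of_dvd p.2.pos hr2) hr0
          rw [PNat.toPNat'_coe hr0, PNat.toPNat'_coe hq1, PNat.toPNat'_coe hq2]
          have hkey := keyC r ((p.1 : ℕ) / r) ((p.2 : ℕ) / r) hr0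
          rw [Nat.mul_div_cancel' hr1, Nat.mul_div_cancel' hr2] at hkey
          have hkeyN := congrArg (fun z => ‖z‖) hkey
          simp only [norm_mul, Complex.norm_natCast] at hkeyN
          simp only [norm_mul]
          linear_combination (‖a ((p.1 : ℕ) / r)‖ * ‖a ((p.2 : ℕ) / r)‖) * hkeyN
  -- F is summable
  have hFsum : Summable (fun p : ℕ+ × ℕ+ =>
      χ (((p.1 : ℕ)) : ZMod N) * a ((p.1 : ℕ) * (p.2 : ℕ)) *
        ((p.1 : ℕ) : ℂ) ^ (-(s - w + 1)) * ((p.2 : ℕ) : ℂ) ^ (-(w + s))) := hFn.of_norm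
  -- Step (b) : the LHS equals the sum of F over all pairs
  have hS : (∑' n : ℕ+, a (n : ℕ) * ((n : ℕ) : ℂ) ^ (-(s + w))
        * ∑ d ∈ (n : ℕ).divisors, χ (d : ZMod N) * (d : ℂ) ^ (2 * w - 1))
      = ∑' p : ℕ+ × ℕ+, χ (((p.1 : ℕ)) : ZMod N) * a ((p.1 : ℕ) * (p.2 : ℕ)) *
          ((p.1 : ℕ) : ℂ) ^ (-(s - w + 1)) * ((p.2 : ℕ) : ℂ) ^ (-(w + s)) := by
    rw [← (hFsum.hasSum.tsum_fiberwise (fun p : ℕ+ × ℕ+ => p.1 * p.2)).tsum_eq]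
    refine tsum_congr fun k => ?_
    rw [tsum_fiber_mul k (fun p : ℕ+ × ℕ+ => χ (((p.1 : ℕ)) : ZMod N) * a ((p.1 : ℕ) * (p.2 : ℕ)) *
      ((p.1 : ℕ) : ℂ) ^ (-(s - w + 1)) * ((p.2 : ℕ) : ℂ) ^ (-(w + s)))]
    rw [Finset.mul_sum]
    refine Finset.sum_congr rfl fun d hd => ?_
    have hd0 : 0 < d := Nat.pos_of_mem_divisors hd
    have hdd := Nat.dvd_of_mem_divisors hd
    have hq0 : 0 < (k : ℕ) / d := Nat.div_pos (Nat.le_of_dvd k.pos hdd) hd0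
    rw [PNat.toPNat'_coe hd0, PNat.toPNat'_coe hq0]
    have hdne : (d : ℂ) ≠ 0 := Nat.cast_ne_zero.mpr hd0.ne'
    obtain ⟨q, hqdef⟩ : ∃ q, (k : ℕ) / d = q := ⟨_, rfl⟩
    rw [hqdef]
    have hk : (k : ℕ) = d * q := by rw [← hqdef]; exact (Nat.mul_div_cancel' hdd).symm
    rw [hk]
    push_cast
    rw [Complex.natCast_mul_natCast_cpow]
    have e1 : (d : ℂ) ^ (-(s + w)) * (d : ℂ) ^ (2 * w - 1) = (d : ℂ) ^ (-(s - w + 1)) := by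
      rw [← Complex.cpow_add _ _ hdne]
      congr 1
      ring
    have e2 : ((q : ℕ) : ℂ) ^ (-(s + w)) = ((q : ℕ) : ℂ) ^ (-(w + s)) :=
      congrArg (fun z => ((q : ℕ) : ℂ) ^ z) (by ring)
    rw [e2]
    linear_combination (χ (d : ZMod N) * a (d * q) * ((q : ℕ) : ℂ) ^ (-(w + s))) * e1
  -- Step (c) : Cauchy product of the two numerator L-series
  have hC : (∑' n : ℕ+, χ ((n : ℕ) : ZMod N) * a (n : ℕ) * ((n : ℕ) : ℂ) ^ (-(s - w + 1)))
        * (∑' n : ℕ+, a (n : ℕ) * ((n : ℕ) : ℂ) ^ (-(w + s)))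
      = ∑' z : ℕ+ × ℕ+, (χ ((z.1 : ℕ) : ZMod N) * a (z.1 : ℕ) * ((z.1 : ℕ) : ℂ) ^ (-(s - w + 1)))
          * (a (z.2 : ℕ) * ((z.2 : ℕ) : ℂ) ^ (-(w + s))) :=
    tsum_mul_tsum_of_summable_norm (f := fun n : ℕ+ => χ ((n : ℕ) : ZMod N) * a (n : ℕ) * ((n : ℕ) : ℂ) ^ (-(s - w + 1)))
      (g := fun n : ℕ+ => a (n : ℕ) * ((n : ℕ) : ℂ) ^ (-(w + s))) h2 h3
  -- Step (d) : rearrange by pulling out common gcd factors via the Hecke relation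
  have hGsum : Summable (fun x : ℕ+ × ℕ+ × ℕ+ =>
      (χ ((x.1 : ℕ) : ZMod N) * ((x.1 : ℕ) : ℂ) ^ (-(2 * s))) *
        (χ (((x.2.1 : ℕ)) : ZMod N) * a ((x.2.1 : ℕ) * (x.2.2 : ℕ)) *
          ((x.2.1 : ℕ) : ℂ) ^ (-(s - w + 1)) * ((x.2.2 : ℕ) : ℂ) ^ (-(w + s)))) :=
    summable_mul_of_summable_norm (f := fun n : ℕ+ => χ ((n : ℕ) : ZMod N) * ((n : ℕ) : ℂ) ^ (-(2 * s)))
      (g := fun p : ℕ+ × ℕ+ => χ (((p.1 : ℕ)) : ZMod N) * a ((p.1 : ℕ) * (p.2 : ℕ)) *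
        ((p.1 : ℕ) : ℂ) ^ (-(s - w + 1)) * ((p.2 : ℕ) : ℂ) ^ (-(w + s))) h4 hFn
  have hD : (∑' z : ℕ+ × ℕ+, (χ ((z.1 : ℕ) : ZMod N) * a (z.1 : ℕ) *
          ((z.1 : ℕ) : ℂ) ^ (-(s - w + 1))) * (a (z.2 : ℕ) * ((z.2 : ℕ) : ℂ) ^ (-(w + s))))
      = ∑' x : ℕ+ × ℕ+ × ℕ+,
          (χ ((x.1 : ℕ) : ZMod N) * ((x.1 : ℕ) : ℂ) ^ (-(2 * s))) *
            (χ (((x.2.1 : ℕ)) : ZMod N) * a ((x.2.1 : ℕ) * (x.2.2 : ℕ)) *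
              ((x.2.1 : ℕ) : ℂ) ^ (-(s - w + 1)) * ((x.2.2 : ℕ) : ℂ) ^ (-(w + s))) := by
    rw [← (hGsum.hasSum.tsum_fiberwise
      (fun x : ℕ+ × ℕ+ × ℕ+ => (x.1 * x.2.1, x.1 * x.2.2))).tsum_eq]
    refine tsum_congr fun p => ?_
    rw [tsum_fiber_gcd p (fun x : ℕ+ × ℕ+ × ℕ+ =>
      (χ ((x.1 : ℕ) : ZMod N) * ((x.1 : ℕ) : ℂ) ^ (-(2 * s))) *
        (χ (((x.2.1 : ℕ)) : ZMod N) * a ((x.2.1 : ℕ) * (x.2.2 : ℕ)) *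
          ((x.2.1 : ℕ) : ℂ) ^ (-(s - w + 1)) * ((x.2.2 : ℕ) : ℂ) ^ (-(w + s))))]
    have hH := hHecke (p.1 : ℕ) (p.2 : ℕ) p.1.pos p.2.pos
    calc (χ ((p.1 : ℕ) : ZMod N) * a (p.1 : ℕ) * ((p.1 : ℕ) : ℂ) ^ (-(s - w + 1))) *
          (a (p.2 : ℕ) * ((p.2 : ℕ) : ℂ) ^ (-(w + s)))
        = (χ ((p.1 : ℕ) : ZMod N) * ((p.1 : ℕ) : ℂ) ^ (-(s - w + 1)) *
            ((p.2 : ℕ) : ℂ) ^ (-(w + s))) * (a (p.1 : ℕ) * a (p.2 : ℕ)) := by ring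
      _ = (χ ((p.1 : ℕ) : ZMod N) * ((p.1 : ℕ) : ℂ) ^ (-(s - w + 1)) *
            ((p.2 : ℕ) : ℂ) ^ (-(w + s))) *
            ∑ r ∈ (Nat.gcd (p.1 : ℕ) (p.2 : ℕ)).divisors,
              (r : ℂ) * a ((p.1 : ℕ) * (p.2 : ℕ) / r ^ 2) := by rw [hH]
      _ = ∑ r ∈ (Nat.gcd (p.1 : ℕ) (p.2 : ℕ)).divisors,
            (χ ((p.1 : ℕ) : ZMod N) * ((p.1 : ℕ) : ℂ) ^ (-(s - w + 1)) *
              ((p.2 : ℕ) : ℂ) ^ (-(w + s))) *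
              ((r : ℂ) * a ((p.1 : ℕ) * (p.2 : ℕ) / r ^ 2)) := by rw [Finset.mul_sum]
      _ = _ := ?_
    refine Finset.sum_congr rfl fun r hr => ?_
    have hr0 : 0 < r := Nat.pos_of_mem_divisors hr
    have hrd := Nat.dvd_of_mem_divisors hr
    have hr1 : r ∣ (p.1 : ℕ) := hrd.trans (Nat.gcd_dvd_left _ _)
    have hr2 : r ∣ (p.2 : ℕ) := hrd.trans (Nat.gcd_dvd_right _ _)
    have hq1 : 0 < (p.1 : ℕ) / r := Nat.div_pos (Nat.le_of_dvd p.1.pos hr1) hr0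
    have hq2 : 0 < (p.2 : ℕ) / r := Nat.div_pos (Nat.le_of_dvd p.2.pos hr2) hr0
    rw [PNat.toPNat'_coe hr0, PNat.toPNat'_coe hq1, PNat.toPNat'_coe hq2]
    have hdiv : (p.1 : ℕ) * (p.2 : ℕ) / r ^ 2 = ((p.1 : ℕ) / r) * ((p.2 : ℕ) / r) := by
      rw [Nat.div_mul_div_comm hr1 hr2, sq]
    rw [hdiv]
    have hkey := keyC r ((p.1 : ℕ) / r) ((p.2 : ℕ) / r) hr0
    rw [Nat.mul_div_cancel' hr1, Nat.mul_div_cancel' hr2] at hkey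
    linear_combination (a (((p.1 : ℕ) / r) * ((p.2 : ℕ) / r))) * hkey
  -- Step (e) : the triple sum factors as the denominator times the sum of F
  have hE : (∑' x : ℕ+ × ℕ+ × ℕ+,
        (χ ((x.1 : ℕ) : ZMod N) * ((x.1 : ℕ) : ℂ) ^ (-(2 * s))) *
          (χ (((x.2.1 : ℕ)) : ZMod N) * a ((x.2.1 : ℕ) * (x.2.2 : ℕ)) *
            ((x.2.1 : ℕ) : ℂ) ^ (-(s - w + 1)) * ((x.2.2 : ℕ) : ℂ) ^ (-(w + s))))
      = (∑' n : ℕ+, χ ((n : ℕ) : ZMod N) * ((n : ℕ) : ℂ) ^ (-(2 * s)))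
        * ∑' p : ℕ+ × ℕ+, χ (((p.1 : ℕ)) : ZMod N) * a ((p.1 : ℕ) * (p.2 : ℕ)) *
            ((p.1 : ℕ) : ℂ) ^ (-(s - w + 1)) * ((p.2 : ℕ) : ℂ) ^ (-(w + s)) :=
    (tsum_mul_tsum_of_summable_norm (f := fun n : ℕ+ => χ ((n : ℕ) : ZMod N) * ((n : ℕ) : ℂ) ^ (-(2 * s)))
      (g := fun p : ℕ+ × ℕ+ => χ (((p.1 : ℕ)) : ZMod N) * a ((p.1 : ℕ) * (p.2 : ℕ)) *
        ((p.1 : ℕ) : ℂ) ^ (-(s - w + 1)) * ((p.2 : ℕ) : ℂ) ^ (-(w + s))) h4 hFn).symm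
  rw [eq_div_iff hL, hS, mul_comm, hC, hD, hE]
end
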